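/- arXiv:2303.08797 — 2 statements merged into one kernel-verified Lean document; each statement's English description precedes it below -/
import Mathlib

section
/- Fix t ∈ (0,1) and let x_t = Y + γ(t)z where Y = I(t,x₀,x₁) is independent of z ~ N(0, Id) and γ(t) > 0. Let ρ(t,·) denote the (smooth, strictly positive) density of x_t. Then for every compactly supported smooth φ: ℝ^d → ℝ one has E[z φ(x_t)] = −γ(t) ∫_{ℝ^d} φ(x) ∇ρ(t,x) dx. Equivalently, the conditional expectation η_z(t,x) = E[z | x_t = x] satisfies η_z(t,x) ρ(t,x) = −γ(t) ∇ρ(t,x), i.e. the score s(t,x) = ∇ log ρ(t,x) equals −γ(t)^{-1} η_z(t,x) for all x ∈ ℝ^d. -/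
/-!
Gaussian integration by parts: the standard Gaussian density `p` satisfies `∇p(x) = -p(x) x`, so
`E[ψ(z) z] = E[∇ψ(z)]` for compactly supported `C¹` functions `ψ` (Stein's identity). Conditioning
on `Y`, which is independent of `z`, and applying it to `ψ = φ(Y + γ ·)` gives
`E[φ(x_t) z] = γ E[∇φ(x_t)] = γ ∫ ρ ∇φ = -γ ∫ φ ∇ρ`, the last step by integration by parts.
Hence `ρ η` and `-γ ∇ρ` are continuous and have the same integral against every test function,
so they coincide, and dividing by `ρ > 0` gives the score.
-/

open MeasureTheory ProbabilityTheory Real Set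
open scoped RealInnerProductSpace ENNReal

noncomputable section

def stdGaussian (d : ℕ) : Measure (EuclideanSpace ℝ (Fin d)) :=
  volume.withDensity fun x => ENNReal.ofReal ((2 * π) ^ (-(d : ℝ) / 2) * Real.exp (-‖x‖ ^ 2 / 2))

section Gradient

variable {F : Type*} [NormedAddCommGroup F] [InnerProductSpace ℝ F] [CompleteSpace F]

theorem ContDiff.continuous_gradient {f : F → ℝ} (hf : ContDiff ℝ 1 f) :
    Continuous (gradient f) :=
  (InnerProductSpace.toDual ℝ F).symm.continuous.comp (hf.continuous_fderiv one_ne_zero)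

theorem HasCompactSupport.gradient {f : F → ℝ} (hf : HasCompactSupport f) :
    HasCompactSupport (gradient f) :=
  hf.fderiv (𝕜 := ℝ) |>.comp_left (g := (InnerProductSpace.toDual ℝ F).symm) (map_zero _)

theorem gradient_comp_const_add_smul {f : F → ℝ} (y : F) (c : ℝ) {x : F}
    (hf : DifferentiableAt ℝ f (y + c • x)) :
    gradient (fun x => f (y + c • x)) x = c • gradient f (y + c • x) := by
  have hA : HasFDerivAt (fun x : F => y + c • x) (c • ContinuousLinearMap.id ℝ F) x :=
    ((hasFDerivAt_id x).const_smul c).const_add y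
  refine (hf.hasFDerivAt.comp x hA).hasGradientAt.gradient.trans ?_
  rw [ContinuousLinearMap.comp_smul, ContinuousLinearMap.comp_id, _root_.map_smul]
  rfl

theorem gradient_log_comp {f : F → ℝ} {x : F} (hf : DifferentiableAt ℝ f x) (hx : f x ≠ 0) :
    gradient (fun y => Real.log (f y)) x = (f x)⁻¹ • gradient f x := by
  have := ((Real.hasDerivAt_log hx).comp_hasFDerivAt x hf.hasFDerivAt).hasGradientAt.gradient
  refine this.trans ?_
  rw [_root_.map_smul]
  rfl

theorem gradient_log_eq_inv_smul {f : F → ℝ} {x v : F} {c : ℝ} (hf : DifferentiableAt ℝ f x)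
    (hx : f x ≠ 0) (hc : c ≠ 0) (h : f x • v = c • gradient f x) :
    gradient (fun y => Real.log (f y)) x = c⁻¹ • v := by
  rw [gradient_log_comp hf hx]
  calc (f x)⁻¹ • gradient f x = (f x)⁻¹ • c⁻¹ • f x • v := by
        rw [h, smul_smul c⁻¹, inv_mul_cancel₀ hc, one_smul]
    _ = c⁻¹ • v := by
        rw [smul_smul, smul_smul, mul_comm, ← mul_assoc, mul_inv_cancel₀ hx, one_mul]

variable [FiniteDimensional ℝ F] [MeasurableSpace F] [BorelSpace F] {μ : Measure F}
  [μ.IsAddHaarMeasure]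

theorem integral_smul_gradient_eq_neg_integral_smul_gradient {f g : F → ℝ}
    (hf : ContDiff ℝ 1 f) (hfc : HasCompactSupport f) (hg : ContDiff ℝ 1 g) :
    ∫ x, f x • gradient g x ∂μ = -∫ x, g x • gradient f x ∂μ := by
  refine ext_inner_left ℝ fun v => ?_
  have inner_gradient (h : F → ℝ) (x : F) : ⟪v, gradient h x⟫ = fderiv ℝ h x v := by
    rw [real_inner_comm, inner_gradient_left]
  have hf' : Continuous fun x => fderiv ℝ f x v :=
    (hf.continuous_fderiv one_ne_zero).clm_apply continuous_const
  have hg' : Continuous fun x => fderiv ℝ g x v :=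
    (hg.continuous_fderiv one_ne_zero).clm_apply continuous_const
  have hf'c : HasCompactSupport fun x => fderiv ℝ f x v :=
    hfc.fderiv (𝕜 := ℝ) |>.comp_left (g := fun L : F →L[ℝ] ℝ => L v) rfl
  have hfg' : Integrable (fun x => f x • gradient g x) μ :=
    (hf.continuous.smul hg.continuous_gradient).integrable_of_hasCompactSupport hfc.smul_right
  have hf'g : Integrable (fun x => g x • gradient f x) μ :=
    (hg.continuous.smul hf.continuous_gradient).integrable_of_hasCompactSupport
      hfc.gradient.smul_left
  calc ⟪v, ∫ x, f x • gradient g x ∂μ⟫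
      = ∫ x, f x * fderiv ℝ g x v ∂μ := by
        rw [← integral_inner hfg']
        simp only [inner_smul_right, inner_gradient]
    _ = -∫ x, fderiv ℝ f x v * g x ∂μ :=
      integral_mul_fderiv_eq_neg_fderiv_mul_of_integrable
        ((hf'.mul hg.continuous).integrable_of_hasCompactSupport hf'c.mul_right)
        ((hf.continuous.mul hg').integrable_of_hasCompactSupport hfc.mul_right)
        ((hf.continuous.mul hg.continuous).integrable_of_hasCompactSupport hfc.mul_right)
        (fun x _ => hf.differentiable one_ne_zero x) (fun x _ => hg.differentiable one_ne_zero x)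
    _ = ⟪v, -∫ x, g x • gradient f x ∂μ⟫ := by
        rw [inner_neg_right, ← integral_inner hf'g]
        simp only [inner_smul_right, inner_gradient, mul_comm]

end Gradient

theorem Continuous.eq_of_integral_contDiff_smul_eq {E G : Type*} [NormedAddCommGroup E]
    [NormedSpace ℝ E] [FiniteDimensional ℝ E] [MeasurableSpace E] [BorelSpace E]
    [NormedAddCommGroup G] [NormedSpace ℝ G] [CompleteSpace G] {μ : Measure E}
    [IsLocallyFiniteMeasure μ] [μ.IsOpenPosMeasure] {f f' : E → G}
    (hf : Continuous f) (hf' : Continuous f')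
    (h : ∀ g : E → ℝ, ContDiff ℝ (⊤ : ℕ∞) g → HasCompactSupport g →
      ∫ x, g x • f x ∂μ = ∫ x, g x • f' x ∂μ) :
    f = f' :=
  (hf.ae_eq_iff_eq μ hf').mp <|
    ae_eq_of_integral_contDiff_smul_eq hf.locallyIntegrable hf'.locallyIntegrable h

theorem integral_withDensity_ofReal {X G : Type*} [MeasurableSpace X] [NormedAddCommGroup G]
    [NormedSpace ℝ G] {μ : Measure X} {ρ : X → ℝ} (hρ : Measurable ρ) (hρ0 : ∀ x, 0 ≤ ρ x)
    (f : X → G) :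
    ∫ x, f x ∂μ.withDensity (fun x => ENNReal.ofReal (ρ x)) = ∫ x, ρ x • f x ∂μ := by
  rw [integral_withDensity_eq_integral_toReal_smul hρ.ennreal_ofReal
    (ae_of_all _ fun _ => ENNReal.ofReal_lt_top)]
  simp_rw [ENNReal.toReal_ofReal (hρ0 _)]

theorem ProbabilityTheory.IndepFun.integral_comp_eq_integral_integral {Ω α β G : Type*}
    [MeasurableSpace Ω] [MeasurableSpace α] [MeasurableSpace β] [NormedAddCommGroup G]
    [NormedSpace ℝ G] {P : Measure Ω} [IsFiniteMeasure P] {X : Ω → α} {Y : Ω → β} (hXY : IndepFun X Y P)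
    (hX : AEMeasurable X P) (hY : AEMeasurable Y P) {f : α × β → G}
    (hf : Integrable f ((P.map X).prod (P.map Y))) :
    ∫ ω, f (X ω, Y ω) ∂P = ∫ x, ∫ y, f (x, y) ∂P.map Y ∂P.map X := by
  rw [← integral_prod _ hf, ← hXY.map_prod_eq_prod_map_map hX hY]
  rw [← hXY.map_prod_eq_prod_map_map hX hY] at hf
  exact (integral_map (hX.prodMk hY) hf.aestronglyMeasurable).symm

theorem integrable_exp_neg_mul_sq_norm {V : Type*} [NormedAddCommGroup V] [InnerProductSpace ℝ V]
    [FiniteDimensional ℝ V] [MeasurableSpace V] [BorelSpace V] {b : ℝ} (hb : 0 < b) :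
    Integrable fun x : V => Real.exp (-b * ‖x‖ ^ 2) := by
  simpa [Complex.norm_exp, ← Complex.ofReal_pow] using
    (GaussianFourier.integrable_cexp_neg_mul_sq_norm_add (V := V) (b := b) (by simpa) 0 0).norm

theorem mul_exp_neg_sq_div_two_le (r : ℝ) :
    r * Real.exp (-r ^ 2 / 2) ≤ Real.exp (-4⁻¹ * r ^ 2) :=
  calc r * Real.exp (-r ^ 2 / 2) ≤ Real.exp (r - 1) * Real.exp (-r ^ 2 / 2) := by
        gcongr; linarith [Real.add_one_le_exp (r - 1)]
    _ ≤ Real.exp (-4⁻¹ * r ^ 2) := by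
        rw [← Real.exp_add]; gcongr; nlinarith [sq_nonneg (r / 2 - 1)]

section StdGaussian

variable {d : ℕ}

local notation "E" => EuclideanSpace ℝ (Fin d)

def stdGaussianPDF (d : ℕ) (x : EuclideanSpace ℝ (Fin d)) : ℝ :=
  (2 * π) ^ (-(d : ℝ) / 2) * Real.exp (-‖x‖ ^ 2 / 2)

theorem stdGaussian_eq_withDensity :
    stdGaussian d = volume.withDensity fun x => ENNReal.ofReal (stdGaussianPDF d x) :=
  rfl

theorem stdGaussianPDF_pos (x : E) : 0 < stdGaussianPDF d x := by
  unfold stdGaussianPDF; positivity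

theorem contDiff_stdGaussianPDF {n : WithTop ℕ∞} : ContDiff ℝ n (stdGaussianPDF d) :=
  contDiff_const.mul ((contDiff_norm_sq ℝ).neg.div_const 2).exp

theorem continuous_stdGaussianPDF : Continuous (stdGaussianPDF d) :=
  (contDiff_stdGaussianPDF (n := 0)).continuous

theorem hasGradientAt_stdGaussianPDF (x : E) :
    HasGradientAt (stdGaussianPDF d) (-stdGaussianPDF d x • x) x := by
  rw [hasGradientAt_iff_hasFDerivAt]
  refine (((hasStrictFDerivAt_norm_sq x).hasFDerivAt.fun_neg.mul_const 2⁻¹).exp.const_mul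
    ((2 * π) ^ (-(d : ℝ) / 2))).congr_fderiv ?_
  ext y
  simp only [stdGaussianPDF, smul_apply, neg_apply,
    innerSL_apply_apply, InnerProductSpace.toDual_apply_apply, real_inner_smul_left, smul_eq_mul,
    nsmul_eq_mul, div_eq_mul_inv]
  ring

theorem integrable_norm_stdGaussian : Integrable (fun x : E => ‖x‖) (stdGaussian d) := by
  rw [stdGaussian_eq_withDensity, integrable_withDensity_iff_integrable_smul'
    continuous_stdGaussianPDF.measurable.ennreal_ofReal
    (ae_of_all _ fun _ => ENNReal.ofReal_lt_top)]
  simp_rw [ENNReal.toReal_ofReal (stdGaussianPDF_pos _).le, smul_eq_mul]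
  refine ((integrable_exp_neg_mul_sq_norm (V := E) (b := 4⁻¹) (by norm_num)).const_mul
    ((2 * π) ^ (-(d : ℝ) / 2))).mono'
    (continuous_stdGaussianPDF.mul continuous_norm).aestronglyMeasurable
    (ae_of_all _ fun x => ?_)
  rw [Real.norm_of_nonneg (by positivity [stdGaussianPDF_pos x]), stdGaussianPDF, mul_assoc,
    mul_comm (Real.exp _)]
  gcongr
  exact mul_exp_neg_sq_div_two_le ‖x‖

theorem integral_smul_stdGaussian_eq_integral_gradient {ψ : E → ℝ} (hψ : ContDiff ℝ 1 ψ)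
    (hψc : HasCompactSupport ψ) :
    ∫ x, ψ x • x ∂stdGaussian d = ∫ x, gradient ψ x ∂stdGaussian d := by
  simp only [stdGaussian_eq_withDensity, integral_withDensity_ofReal
    continuous_stdGaussianPDF.measurable fun x => (stdGaussianPDF_pos x).le]
  calc ∫ x, stdGaussianPDF d x • ψ x • x
      = -∫ x, ψ x • gradient (stdGaussianPDF d) x := by
        rw [← integral_neg]
        congr 1 with x
        rw [(hasGradientAt_stdGaussianPDF x).gradient, neg_smul, smul_neg, neg_neg, smul_comm]
    _ = ∫ x, stdGaussianPDF d x • gradient ψ x := by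
        rw [integral_smul_gradient_eq_neg_integral_smul_gradient hψ hψc contDiff_stdGaussianPDF,
          neg_neg]

theorem integral_comp_add_smul_smul_stdGaussian {φ : E → ℝ} (hφ : ContDiff ℝ 1 φ)
    (hφc : HasCompactSupport φ) (y : E) {c : ℝ} (hc : c ≠ 0) :
    ∫ x, φ (y + c • x) • x ∂stdGaussian d =
      c • ∫ x, gradient φ (y + c • x) ∂stdGaussian d := by
  have hψc : HasCompactSupport fun x => φ (y + c • x) :=
    hφc.comp_homeomorph ((Homeomorph.smulOfNeZero c hc).trans (Homeomorph.addLeft y))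
  rw [integral_smul_stdGaussian_eq_integral_gradient (ψ := fun x => φ (y + c • x))
    (hφ.comp (by fun_prop)) hψc, ← integral_smul]
  simp_rw [gradient_comp_const_add_smul y c (hφ.differentiable one_ne_zero _)]

theorem integral_comp_add_smul_smul_eq_smul_integral_gradient {Ω : Type*} [MeasurableSpace Ω]
    {P : Measure Ω} [IsFiniteMeasure P] {γ : ℝ} (hγ : γ ≠ 0) {Y z : Ω → E}
    (hY : Measurable Y) (hz : Measurable z) (hzlaw : P.map z = stdGaussian d)
    (hindep : IndepFun Y z P) {φ : E → ℝ} (hφ : ContDiff ℝ 1 φ) (hφc : HasCompactSupport φ) :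
    ∫ ω, φ (Y ω + γ • z ω) • z ω ∂P = γ • ∫ ω, gradient φ (Y ω + γ • z ω) ∂P := by
  obtain ⟨C, hC⟩ := hφ.continuous.bounded_above_of_compact_support hφc
  obtain ⟨C', hC'⟩ := hφ.continuous_gradient.bounded_above_of_compact_support hφc.gradient
  have hA : Continuous fun p : E × E => p.1 + γ • p.2 := by fun_prop
  have hint : Integrable (fun p : E × E => φ (p.1 + γ • p.2) • p.2)
      ((P.map Y).prod (P.map z)) := by
    rw [hzlaw]
    refine ((integrable_const C).mul_prod integrable_norm_stdGaussian).mono'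
      ((hφ.continuous.comp hA).smul continuous_snd).aestronglyMeasurable
      (ae_of_all _ fun p => ?_)
    rw [norm_smul]
    exact mul_le_mul_of_nonneg_right (hC _) (norm_nonneg _)
  have hint' : Integrable (fun p : E × E => gradient φ (p.1 + γ • p.2))
      ((P.map Y).prod (P.map z)) :=
    (integrable_const C').mono' (hφ.continuous_gradient.comp hA).aestronglyMeasurable
      (ae_of_all _ fun p => hC' _)
  calc ∫ ω, φ (Y ω + γ • z ω) • z ω ∂P
      = ∫ y, ∫ x, φ (y + γ • x) • x ∂P.map z ∂P.map Y :=
        hindep.integral_comp_eq_integral_integral hY.aemeasurable hz.aemeasurable hint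
    _ = ∫ y, γ • ∫ x, gradient φ (y + γ • x) ∂P.map z ∂P.map Y := by
        simp_rw [hzlaw, integral_comp_add_smul_smul_stdGaussian hφ hφc _ hγ]
    _ = γ • ∫ ω, gradient φ (Y ω + γ • z ω) ∂P := by
        rw [integral_smul,
          hindep.integral_comp_eq_integral_integral hY.aemeasurable hz.aemeasurable hint']

theorem integral_comp_add_smul_smul_eq_neg_smul_integral_smul_gradient {Ω : Type*}
    [MeasurableSpace Ω] {P : Measure Ω} [IsFiniteMeasure P] {γ : ℝ} (hγ : γ ≠ 0) {Y z : Ω → E}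
    (hY : Measurable Y) (hz : Measurable z) (hzlaw : P.map z = stdGaussian d)
    (hindep : IndepFun Y z P) {ρ : E → ℝ} (hρ : ContDiff ℝ 1 ρ) (hρ0 : ∀ x, 0 ≤ ρ x)
    (hρlaw : P.map (fun ω => Y ω + γ • z ω) = volume.withDensity fun x => ENNReal.ofReal (ρ x))
    {φ : E → ℝ} (hφ : ContDiff ℝ 1 φ) (hφc : HasCompactSupport φ) :
    ∫ ω, φ (Y ω + γ • z ω) • z ω ∂P = (-γ) • ∫ x, φ x • gradient ρ x := by
  have hxt : Measurable fun ω => Y ω + γ • z ω := hY.add (hz.const_smul γ)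
  rw [integral_comp_add_smul_smul_eq_smul_integral_gradient hγ hY hz hzlaw hindep hφ hφc,
    ← integral_map hxt.aemeasurable hφ.continuous_gradient.aestronglyMeasurable,
    hρlaw, integral_withDensity_ofReal hρ.continuous.measurable hρ0,
    integral_smul_gradient_eq_neg_integral_smul_gradient hφ hφc hρ, neg_smul, smul_neg, neg_neg]

end StdGaussian

/-- Fix `t ∈ (0,1)` and let `x_t = Y + γ z` with `Y ⟂ z ~ N(0,Id)` and `γ > 0`,
and let `ρ` be the (smooth, strictly positive) density of `x_t`.  Then for every compactly
supported smooth `φ : ℝ^d → ℝ`, `E[z φ(x_t)] = −γ ∫ φ(x) ∇ρ(x) dx`.  Equivalently, the conditional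
expectation `η_z(x) = E[z | x_t = x]` satisfies `η_z(x) ρ(x) = −γ ∇ρ(x)`, i.e. the score
`s(x) = ∇ log ρ(x)` equals `−γ⁻¹ η_z(x)` for all `x`. -/
theorem score_identity_of_gaussian_smoothing
    {d : ℕ} {Ω : Type*} [MeasurableSpace Ω] (P : Measure Ω) [IsProbabilityMeasure P]
    (γ : ℝ) (hγ : 0 < γ)
    (Y z : Ω → EuclideanSpace ℝ (Fin d))
    (hYm : Measurable Y) (hzm : Measurable z)
    (hzlaw : Measure.map z P = stdGaussian d)
    (hindep : IndepFun Y z P)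
    (ρ : EuclideanSpace ℝ (Fin d) → ℝ)
    (hρsmooth : ContDiff ℝ (⊤ : ℕ∞) ρ) (hρpos : ∀ x, 0 < ρ x)
    (hρlaw : Measure.map (fun ω => Y ω + γ • z ω) P
      = volume.withDensity fun x => ENNReal.ofReal (ρ x)) :
    (∀ φ : EuclideanSpace ℝ (Fin d) → ℝ, ContDiff ℝ (⊤ : ℕ∞) φ → HasCompactSupport φ →
      ∫ ω, φ (Y ω + γ • z ω) • z ω ∂P = (-γ) • ∫ x, φ x • gradient ρ x)
      ∧ (∀ η : EuclideanSpace ℝ (Fin d) → EuclideanSpace ℝ (Fin d), Continuous η →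
          (∀ φ : EuclideanSpace ℝ (Fin d) → ℝ, Measurable φ → (∃ C, ∀ x, |φ x| ≤ C) →
            ∫ ω, φ (Y ω + γ • z ω) • z ω ∂P = ∫ x, (φ x * ρ x) • η x) →
          ∀ x, ρ x • η x = (-γ) • gradient ρ x
            ∧ gradient (fun y => Real.log (ρ y)) x = (-γ⁻¹) • η x) := by
  have hρ : ContDiff ℝ 1 ρ := hρsmooth.of_le (by exact_mod_cast le_top)
  have weak_identity φ (hφ : ContDiff ℝ (⊤ : ℕ∞) φ) (hφc : HasCompactSupport φ) :=
    integral_comp_add_smul_smul_eq_neg_smul_integral_smul_gradient hγ.ne' hYm hzm hzlaw hindep hρ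
      (fun x => (hρpos x).le) hρlaw (hφ.of_le (by exact_mod_cast le_top)) hφc
  refine ⟨weak_identity, fun η hη hηlaw x => ?_⟩
  have hρη : (fun x => ρ x • η x) = fun x => (-γ) • gradient ρ x := by
    refine (hρ.continuous.smul hη).eq_of_integral_contDiff_smul_eq (μ := volume)
      (hρ.continuous_gradient.const_smul (-γ) :) fun g hg hgc => ?_
    obtain ⟨C, hC⟩ := hg.continuous.bounded_above_of_compact_support hgc
    calc ∫ x, g x • ρ x • η x = ∫ x, (g x * ρ x) • η x := by simp_rw [smul_smul]
      _ = (-γ) • ∫ x, g x • gradient ρ x :=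
        (hηlaw g hg.continuous.measurable ⟨C, hC⟩).symm.trans (weak_identity g hg hgc)
      _ = ∫ x, g x • (-γ) • gradient ρ x := by
        rw [← integral_smul]; simp_rw [smul_comm (-γ)]
  have hx := congrFun hρη x
  refine ⟨hx, ?_⟩
  rw [gradient_log_eq_inv_smul (hρ.differentiable one_ne_zero x) (hρpos x).ne'
    (neg_ne_zero.2 hγ.ne') hx, inv_neg]
end
end

section
/- Let b: [0,1]×ℝ^d → ℝ^d be continuous and for each x ∈ ℝ^d let X_t(x) solve the probability flow ODE d/dt X_t(x) = b(t, X_t(x)) with X_0(x) = x on [0,1]. Let α, β ∈ C¹([0,1]) with α(0) = 1 and β(0) = 0, define M(t,x) = α(t)x + β(t)X_1(x), and assume there exists N: [0,1]×ℝ^d → ℝ^d with N(t, M(t,x)) = x and M(t, N(t,x)) = x for all (t,x) ∈ [0,1]×ℝ^d. Define the rectified velocity b^rec(t,x) = α̇(t) N(t,x) + β̇(t) X_1(N(t,x)). Then for every x ∈ ℝ^d, the curve X_t^rec(x) := α(t)x + β(t)X_1(x) satisfies d/dt X_t^rec(x) = b^rec(t, X_t^rec(x)) with X_0^rec(x) =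 x; in particular, if additionally α(1) = 0 and β(1) = 1, then X_1^rec(x) = X_1(x), so the rectified probability flow produces the same time-one map as the original flow. -/
open Set

noncomputable section

/-- (Theorem 5.3, rectified flows.)  Let `X_t(x)` solve the probability flow
ODE `d/dt X_t(x) = b(t, X_t(x))`, `X_0(x) = x`, let `M(t,x) = α(t)x + β(t)X_1(x)` with
`α(0) = 1`, `β(0) = 0`, and suppose `N(t,·)` is a (two-sided) inverse of `M(t,·)`.  Then the
rectified velocity `b^rec(t,x) = α̇(t)N(t,x) + β̇(t)X_1(N(t,x))` is such that the curve
`X_t^rec(x) = α(t)x + β(t)X_1(x)` solves `d/dt X_t^rec = b^rec(t, X_t^rec)`,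
`X_0^rec(x) = x`; in particular, if `α(1) = 0` and `β(1) = 1`, then `X_1^rec = X_1`, so
rectification leaves the time-one map unchanged. -/
theorem rectified_flow_has_linear_solutions_and_same_endpoint_map
    {d : ℕ}
    (b : ℝ → EuclideanSpace ℝ (Fin d) → EuclideanSpace ℝ (Fin d))
    (X : ℝ → EuclideanSpace ℝ (Fin d) → EuclideanSpace ℝ (Fin d))
    (α β α' β' : ℝ → ℝ)
    (N : ℝ → EuclideanSpace ℝ (Fin d) → EuclideanSpace ℝ (Fin d))
    (hbcont : Continuous fun p : ℝ × EuclideanSpace ℝ (Fin d) => b p.1 p.2)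
    -- `X` solves the probability flow ODE on `[0,1]` with `X_0(x) = x`:
    (hX0 : ∀ x, X 0 x = x)
    (hXode : ∀ x, ∀ t ∈ Set.Icc (0 : ℝ) 1, HasDerivAt (fun τ => X τ x) (b t (X t x)) t)
    -- `α, β ∈ C¹([0,1])` with derivatives `α', β'`, and `α(0) = 1`, `β(0) = 0`:
    (hα : ∀ t ∈ Set.Icc (0 : ℝ) 1, HasDerivAt α (α' t) t)
    (hβ : ∀ t ∈ Set.Icc (0 : ℝ) 1, HasDerivAt β (β' t) t)
    (hα'cont : ContinuousOn α' (Set.Icc (0 : ℝ) 1))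
    (hβ'cont : ContinuousOn β' (Set.Icc (0 : ℝ) 1))
    (hα0 : α 0 = 1) (hβ0 : β 0 = 0)
    -- `N(t,·)` inverts `M(t,x) = α(t)x + β(t)X_1(x)`:
    (hNM : ∀ t ∈ Set.Icc (0 : ℝ) 1, ∀ x, N t (α t • x + β t • X 1 x) = x)
    (hMN : ∀ t ∈ Set.Icc (0 : ℝ) 1, ∀ x, α t • N t x + β t • X 1 (N t x) = x) :
    ∀ x : EuclideanSpace ℝ (Fin d),
      (α 0 • x + β 0 • X 1 x = x)
      ∧ (∀ t ∈ Set.Icc (0 : ℝ) 1,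
          HasDerivAt (fun τ => α τ • x + β τ • X 1 x)
            (α' t • N t (α t • x + β t • X 1 x)
              + β' t • X 1 (N t (α t • x + β t • X 1 x))) t)
      ∧ (α 1 = 0 → β 1 = 1 → α 1 • x + β 1 • X 1 x = X 1 x) := by
  intro x
  refine ⟨by rw [hα0, hβ0, one_smul, zero_smul, add_zero], ?_, ?_⟩
  · intro t ht
    rw [hNM t ht x]
    exact ((hα t ht).smul_const x).add ((hβ t ht).smul_const (X 1 x))
  · intro h1 h2
    rw [h1, h2, one_smul, zero_smul, zero_add]
end
end
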